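/- Let u ∈ L²(𝕋³;ℝ³) and ε ∈ (0,1]. Then the Constantin–E–Titi commutator identity holds almost everywhere on 𝕋³: (u⊗u)_ε = u_ε ⊗ u_ε + r_ε(u,u) − (u − u_ε) ⊗ (u − u_ε), where r_ε(u,u)(x) := ∫_{ℝ³} ρ_ε(y) (u(x−y) − u(x)) ⊗ (u(x−y) − u(x)) dy. -/

import Mathlib

noncomputable section

open MeasureTheory Real Filter ENNReal

abbrev E3 : Type := EuclideanSpace ℝ (Fin 3)
abbrev E9 : Type := EuclideanSpace ℝ (Fin 3 × Fin 3)

def TorusBox : Set E3 := {x : E3 | ∀ i : Fin 3, x i ∈ Set.Ico (0 : ℝ) (2 * π)}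

def μT : Measure E3 := volume.restrict TorusBox

def unitVec (i : Fin 3) : E3 := EuclideanSpace.single i 1

def Periodic3 {F : Type*} (f : E3 → F) : Prop :=
  ∀ (x : E3) (i : Fin 3), f (x + (2 * π) • unitVec i) = f x

def tLpNorm {F : Type*} [NormedAddCommGroup F] (q : ℝ≥0∞) (f : E3 → F) : ℝ≥0∞ :=
  eLpNorm f q μT

def besovSemi {F : Type*} [NormedAddCommGroup F] (β : ℝ) (q : ℝ≥0∞) (f : E3 → F) : ℝ≥0∞ :=
  ⨆ h : E3, tLpNorm q (fun x => f (x + h) - f x) / ENNReal.ofReal (‖h‖ ^ β)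

def besovNorm {F : Type*} [NormedAddCommGroup F] (β : ℝ) (q : ℝ≥0∞) (f : E3 → F) : ℝ≥0∞ :=
  tLpNorm q f + besovSemi β q f

structure IsMollifier (ρ : E3 → ℝ) : Prop where
  smooth : ContDiff ℝ (⊤ : ℕ∞) ρ
  nonneg : ∀ x, 0 ≤ ρ x
  radial : ∀ x y : E3, ‖x‖ = ‖y‖ → ρ x = ρ y
  support_subset : Function.support ρ ⊆ Metric.ball 0 1
  integral_one : ∫ x : E3, ρ x = 1

def mollify {F : Type*} [NormedAddCommGroup F] [NormedSpace ℝ F]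
    (ρ : E3 → ℝ) (ε : ℝ) (u : E3 → F) (x : E3) : F :=
  ∫ y : E3, ((ε ^ 3)⁻¹ * ρ (ε⁻¹ • y)) • u (x - y)

def gradVF (u : E3 → E3) (x : E3) : E9 :=
  (EuclideanSpace.equiv (Fin 3 × Fin 3) ℝ).symm
    (fun p => fderiv ℝ (fun y => u y p.1) x (unitVec p.2))

def divergence (w : E3 → E3) (x : E3) : ℝ :=
  ∑ i : Fin 3, fderiv ℝ (fun y => w y i) x (unitVec i)

def outer (a b : E3) : E9 :=
  (EuclideanSpace.equiv (Fin 3 × Fin 3) ℝ).symm (fun p => a p.1 * b p.2)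

def frob (A B : E9) : ℝ := ∑ p : Fin 3 × Fin 3, A p * B p

def rCET (ρ : E3 → ℝ) (ε : ℝ) (u : E3 → E3) (x : E3) : E9 :=
  ∫ y : E3, ((ε ^ 3)⁻¹ * ρ (ε⁻¹ • y)) • outer (u (x - y) - u x) (u (x - y) - u x)

def IsWeakGrad (u : E3 → E3) (G : E3 → E9) : Prop :=
  ∀ ψ : E3 → ℝ, ContDiff ℝ (⊤ : ℕ∞) ψ → Periodic3 ψ →
    ∀ (i j : Fin 3),
      ∫ x in TorusBox, u x i * fderiv ℝ ψ x (unitVec j) = - ∫ x in TorusBox, G x (i, j) * ψ x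

def MemH (u : E3 → E3) : Prop :=
  MemLp u 2 μT ∧ Periodic3 u ∧
  ∀ δ : ℝ, 0 < δ → ∃ w : E3 → E3, ContDiff ℝ (⊤ : ℕ∞) w ∧ Periodic3 w ∧
    (∀ x, divergence w x = 0) ∧ eLpNorm (fun x => u x - w x) 2 μT < ENNReal.ofReal δ

structure IsWeakEulerSolution (T : ℝ) (v : ℝ → E3 → E3) (v₀ : E3 → E3) : Prop where
  initMem : MemH v₀
  meas : Measurable (Function.uncurry v)
  aeH : ∀ᵐ t ∂(volume.restrict (Set.Ioo 0 T)), MemH (v t)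
  linfty : ∃ M : ℝ, ∀ᵐ t ∂(volume.restrict (Set.Ioo 0 T)), tLpNorm 2 (v t) ≤ ENNReal.ofReal M
  weakForm : ∀ φ : ℝ → E3 → E3, ContDiff ℝ (⊤ : ℕ∞) (Function.uncurry φ) →
    (∀ t, Periodic3 (φ t)) → (∀ t x, divergence (φ t) x = 0) →
    (∃ T' : ℝ, T' < T ∧ ∀ t, T' ≤ t → ∀ x, φ t x = 0) →
    (∫ t in Set.Ioo 0 T, ∫ x in TorusBox,
        ((∑ i : Fin 3, v t x i * deriv (fun s => φ s x i) t) +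
         ∑ i : Fin 3, ∑ j : Fin 3,
           v t x i * v t x j * fderiv ℝ (fun y => φ t y i) x (unitVec j)))
      = - ∫ x in TorusBox, ∑ i : Fin 3, v₀ x i * φ 0 x i

structure IsLerayHopfSolution (T ν : ℝ) (v : ℝ → E3 → E3) (G : ℝ → E3 → E9)
    (v₀ : E3 → E3) : Prop where
  initMem : MemH v₀
  meas : Measurable (Function.uncurry v)
  measG : Measurable (Function.uncurry G)
  aeH : ∀ᵐ t ∂(volume.restrict (Set.Ioo 0 T)), MemH (v t)
  linfty : ∃ M : ℝ, ∀ᵐ t ∂(volume.restrict (Set.Ioo 0 T)), tLpNorm 2 (v t) ≤ ENNReal.ofReal M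
  aeGrad : ∀ᵐ t ∂(volume.restrict (Set.Ioo 0 T)), IsWeakGrad (v t) (G t)
  l2V : ∫⁻ t in Set.Ioo 0 T, (tLpNorm 2 (G t)) ^ 2 < ⊤
  weakForm : ∀ φ : ℝ → E3 → E3, ContDiff ℝ (⊤ : ℕ∞) (Function.uncurry φ) →
    (∀ t, Periodic3 (φ t)) → (∀ t x, divergence (φ t) x = 0) →
    (∃ T' : ℝ, T' < T ∧ ∀ t, T' ≤ t → ∀ x, φ t x = 0) →
    (∫ t in Set.Ioo 0 T, ∫ x in TorusBox,
        ((∑ i : Fin 3, v t x i * deriv (fun s => φ s x i) t)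
          - ν * ∑ i : Fin 3, ∑ j : Fin 3,
              G t x (i, j) * fderiv ℝ (fun y => φ t y i) x (unitVec j)
          + ∑ i : Fin 3, ∑ j : Fin 3,
              v t x i * v t x j * fderiv ℝ (fun y => φ t y i) x (unitVec j)))
      = - ∫ x in TorusBox, ∑ i : Fin 3, v₀ x i * φ 0 x i
  energyIneq : ∀ t ∈ Set.Icc 0 T,
    (1/2 : ℝ≥0∞) * (tLpNorm 2 (v t)) ^ 2
        + ENNReal.ofReal ν * ∫⁻ τ in Set.Ioo 0 t, (tLpNorm 2 (G τ)) ^ 2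
      ≤ (1/2 : ℝ≥0∞) * (tLpNorm 2 v₀) ^ 2
  initCont : Filter.Tendsto (fun t => tLpNorm 2 (fun x => v t x - v₀ x))
    (nhdsWithin 0 (Set.Ioi 0)) (nhds 0)

/-!
Expanding `(u(x-y) - u(x)) ⊗ (u(x-y) - u(x))` and integrating against `ρ_ε`, which has mass one,
gives `r_ε(u,u)(x) = (u⊗u)_ε(x) - u_ε(x) ⊗ u(x) - u(x) ⊗ u_ε(x) + u(x) ⊗ u(x)`, and the identity
is then algebra. What needs proof is that these integrals converge for a.e. `x`: since `u` is
periodic, Tonelli and the translation invariance of integrals over a fundamental domain of the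
lattice `(2πℤ)³` give `∫_{𝕋³} ∫ |ρ_ε(y)| |u(x-y)|² dy dx = ‖ρ_ε‖₁ ‖u‖²_{L²(𝕋³)} < ∞`.
-/

namespace MeasureTheory.IsAddFundamentalDomain

section Action

variable {G α : Type*} [AddGroup G] [AddAction G α] [MeasurableSpace α]
  [MeasurableConstVAdd G α] {μ : Measure α} [VAddInvariantMeasure G α μ] [Countable G] {s : Set α}

theorem aestronglyMeasurable_of_restrict {β : Type*} [TopologicalSpace β]
    [TopologicalSpace.PseudoMetrizableSpace β] (hs : IsAddFundamentalDomain G s μ) {f : α → β}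
    (hf : ∀ (g : G) x, f (g +ᵥ x) = f x)
    (hfs : AEStronglyMeasurable f (μ.restrict s)) : AEStronglyMeasurable f μ := by
  rw [← hs.sum_restrict, aestronglyMeasurable_sum_measure_iff]
  intro g
  have he : MeasurableEmbedding (g +ᵥ · : α → α) := measurableEmbedding_const_vadd g
  rw [← Set.image_vadd,
    ← ((measurePreserving_vadd g μ).restrict_image_emb he s).aestronglyMeasurable_comp_iff he]
  simpa only [Function.comp_def, hf] using hfs

theorem setLIntegral_comp_vadd {G' : Type*} [AddGroup G'] [AddAction G' α]
    [MeasurableConstVAdd G' α] [VAddInvariantMeasure G' α μ] [VAddCommClass G' G α]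
    (hs : IsAddFundamentalDomain G s μ) {f : α → ℝ≥0∞} (hf : ∀ (g : G) x, f (g +ᵥ x) = f x)
    (g' : G') : ∫⁻ x in s, f (g' +ᵥ x) ∂μ = ∫⁻ x in s, f x ∂μ := by
  rw [(measurePreserving_vadd g' μ).setLIntegral_comp_emb (measurableEmbedding_const_vadd g'),
    Set.image_vadd, (hs.vadd_of_comm g').setLIntegral_eq hs f hf]

end Action

section Translation

variable {α : Type*} [AddCommGroup α] [MeasurableSpace α] [MeasurableAdd₂ α] [MeasurableNeg α]
  {μ : Measure α} [SFinite μ] [μ.IsAddLeftInvariant] {Λ : AddSubgroup α} [Countable Λ] {s : Set α}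

theorem ae_lintegral_mul_sub_lt_top (hs : IsAddFundamentalDomain Λ s μ) {k F : α → ℝ≥0∞}
    (hk : AEMeasurable k μ) (hF : AEMeasurable F μ) (hFΛ : ∀ (γ : Λ) x, F (γ +ᵥ x) = F x)
    (hk_fin : ∫⁻ y, k y ∂μ < ⊤) (hF_fin : ∫⁻ x in s, F x ∂μ < ⊤) :
    ∀ᵐ x ∂μ.restrict s, ∫⁻ y, k y * F (x - y) ∂μ < ⊤ := by
  have hsub : Measure.QuasiMeasurePreserving (fun p : α × α => p.1 - p.2)
      ((μ.restrict s).prod μ) μ :=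
    (quasiMeasurePreserving_sub_of_right_invariant μ μ).mono_left
      ((Measure.absolutelyContinuous_of_le Measure.restrict_le_self).prod .rfl)
  have hprod : AEMeasurable (Function.uncurry fun x y => k y * F (x - y))
      ((μ.restrict s).prod μ) :=
    hk.comp_snd.mul (hF.comp_quasiMeasurePreserving hsub)
  have htranslate (y : α) : ∫⁻ x in s, k y * F (x - y) ∂μ = k y * ∫⁻ x in s, F x ∂μ := by
    have := hs.setLIntegral_comp_vadd (f := fun z => k y * F z)
      (fun γ z => by simp only [hFΛ]) (-y)
    simp only [vadd_eq_add, neg_add_eq_sub] at this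
    rw [this, lintegral_const_mul'' _ hF.restrict]
  refine ae_lt_top' hprod.lintegral_prod_right' (lt_top_iff_ne_top.mp ?_)
  calc ∫⁻ x in s, ∫⁻ y, k y * F (x - y) ∂μ ∂μ
      = ∫⁻ y, ∫⁻ x in s, k y * F (x - y) ∂μ ∂μ := lintegral_lintegral_swap hprod
    _ = (∫⁻ y, k y ∂μ) * ∫⁻ x in s, F x ∂μ := by
      simp only [htranslate]; exact lintegral_mul_const'' _ hk
    _ < ⊤ := ENNReal.mul_lt_top hk_fin hF_fin

end Translation

end MeasureTheory.IsAddFundamentalDomain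

def torusBasis : Module.Basis (Fin 3) ℝ E3 :=
  (EuclideanSpace.basisFun (Fin 3) ℝ).toBasis.unitsSMul fun _ => Units.mk0 (2 * π) (by positivity)

def torusLattice : AddSubgroup E3 := (Submodule.span ℤ (Set.range torusBasis)).toAddSubgroup

instance : Countable torusLattice :=
  inferInstanceAs (Countable (Submodule.span ℤ (Set.range torusBasis)))

theorem torusBasis_apply (i : Fin 3) : torusBasis i = (2 * π) • unitVec i := by
  simp only [torusBasis, Module.Basis.unitsSMul_apply, Units.smul_def, Units.val_mk0,
    OrthonormalBasis.coe_toBasis, EuclideanSpace.basisFun_apply, unitVec]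

theorem torusBasis_repr (x : E3) (i : Fin 3) : torusBasis.repr x i = (2 * π)⁻¹ * x i := by
  simp only [torusBasis, Module.Basis.repr_unitsSMul, Units.smul_def, Units.val_inv_eq_inv_val,
    Units.val_mk0, OrthonormalBasis.coe_toBasis_repr_apply, EuclideanSpace.basisFun_repr,
    smul_eq_mul]

theorem torusBox_eq_fundamentalDomain : TorusBox = ZSpan.fundamentalDomain torusBasis := by
  ext x
  simp only [TorusBox, ZSpan.mem_fundamentalDomain, torusBasis_repr, Set.mem_ofPred_eq,
    Set.mem_Ico]
  refine forall_congr' fun i => ?_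
  have h2π : (0 : ℝ) < 2 * π := by positivity
  rw [inv_mul_lt_iff₀ h2π, mul_one, ← mul_nonneg_iff_of_pos_left (inv_pos.mpr h2π)]

theorem isAddFundamentalDomain_torusBox : IsAddFundamentalDomain torusLattice TorusBox volume := by
  rw [torusBox_eq_fundamentalDomain]
  exact ZSpan.isAddFundamentalDomain' torusBasis volume

theorem Periodic3.vadd_torusLattice {F : Type*} {f : E3 → F} (hf : Periodic3 f)
    (γ : torusLattice) (x : E3) : f (γ +ᵥ x) = f x := by
  obtain ⟨γ, hγ⟩ := γ
  change f (γ + x) = f x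
  rw [torusLattice, Submodule.span_int_eq_addSubgroupClosure] at hγ
  induction hγ using AddSubgroup.closure_induction generalizing x with
  | mem v hv =>
    obtain ⟨i, rfl⟩ := hv
    rw [torusBasis_apply, add_comm]
    exact hf x i
  | zero => rw [zero_add]
  | add v w _ _ hv hw => rw [add_assoc, hv, hw]
  | neg v _ hv => rw [← hv (-v + x), add_neg_cancel_left]

theorem outer_apply (a b : E3) (p : Fin 3 × Fin 3) : outer a b p = a p.1 * b p.2 := rfl

theorem norm_outer (a b : E3) : ‖outer a b‖ = ‖a‖ * ‖b‖ := by
  rw [EuclideanSpace.norm_eq, EuclideanSpace.norm_eq, EuclideanSpace.norm_eq,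
    ← Real.sqrt_mul (by positivity), Fintype.sum_prod_type, Finset.sum_mul_sum]
  simp only [outer_apply, Real.norm_eq_abs, abs_mul, mul_pow]

theorem enorm_outer (a b : E3) : ‖outer a b‖ₑ = ‖a‖ₑ * ‖b‖ₑ := by
  simp only [← ofReal_norm, norm_outer, ENNReal.ofReal_mul (norm_nonneg a)]

def outerBilin : E3 →L[ℝ] E3 →L[ℝ] E9 :=
  (LinearMap.mk₂ ℝ outer
    (fun a a' b => by ext p; simp only [outer_apply, PiLp.add_apply, add_mul])
    (fun c a b => by ext p; simp only [outer_apply, PiLp.smul_apply, smul_eq_mul, mul_assoc])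
    (fun a b b' => by ext p; simp only [outer_apply, PiLp.add_apply, mul_add])
    (fun c a b => by ext p; simp only [outer_apply, PiLp.smul_apply, smul_eq_mul]; ring)
    ).mkContinuous₂ 1 fun a b => by simp [norm_outer]

theorem outerBilin_apply (a b : E3) : outerBilin a b = outer a b := rfl

theorem continuous_outer_self : Continuous fun a : E3 => outer a a :=
  outerBilin.continuous₂.comp (continuous_id.prodMk continuous_id)

section KernelAverage

variable {X : Type*} [MeasurableSpace X] {μ : Measure X} {k : X → ℝ} {v : X → E3}

theorem integrable_smul_of_integrable_smul_outer (hk : Integrable k μ)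
    (hv : AEStronglyMeasurable v μ) (hkvv : Integrable (fun y => k y • outer (v y) (v y)) μ) :
    Integrable (fun y => k y • v y) μ := by
  refine (hk.norm.add hkvv.norm).mono' (hk.aestronglyMeasurable.smul hv) (ae_of_all _ fun y => ?_)
  simp only [Pi.add_apply, norm_smul, norm_outer]
  nlinarith [norm_nonneg (k y), norm_nonneg (v y), sq_nonneg (‖v y‖ - 1)]

theorem integral_smul_outer_self_eq (hk : Integrable k μ) (hk_one : ∫ y, k y ∂μ = 1)
    (hv : AEStronglyMeasurable v μ) (hkvv : Integrable (fun y => k y • outer (v y) (v y)) μ)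
    (a : E3) :
    ∫ y, k y • outer (v y) (v y) ∂μ
      = outer (∫ y, k y • v y ∂μ) (∫ y, k y • v y ∂μ)
        + ∫ y, k y • outer (v y - a) (v y - a) ∂μ
        - outer (a - ∫ y, k y • v y ∂μ) (a - ∫ y, k y • v y ∂μ) := by
  have hkv := integrable_smul_of_integrable_smul_outer hk hv hkvv
  have hexpand : (fun y => k y • outer (v y - a) (v y - a)) = fun y =>
      k y • outer (v y) (v y) - outerBilin (k y • v y) a - outerBilin a (k y • v y)
        + k y • outer a a := by
    ext y p
    simp only [outerBilin_apply, outer_apply, PiLp.add_apply, PiLp.sub_apply, PiLp.smul_apply,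
      smul_eq_mul]
    ring
  have hleft : Integrable (fun y => outerBilin (k y • v y) a) μ :=
    (outerBilin.flip a).integrable_comp hkv
  have hright : Integrable (fun y => outerBilin a (k y • v y)) μ :=
    (outerBilin a).integrable_comp hkv
  have hleft_int : ∫ y, outerBilin (k y • v y) a ∂μ = outerBilin (∫ y, k y • v y ∂μ) a :=
    (outerBilin.flip a).integral_comp_comm hkv
  have hright_int : ∫ y, outerBilin a (k y • v y) ∂μ = outerBilin a (∫ y, k y • v y ∂μ) :=
    (outerBilin a).integral_comp_comm hkv
  have hdiff : Integrable (fun y => k y • outer (v y) (v y) - outerBilin (k y • v y) a) μ :=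
    hkvv.sub hleft
  have hdiff' : Integrable (fun y => k y • outer (v y) (v y) - outerBilin (k y • v y) a
      - outerBilin a (k y • v y)) μ := hdiff.sub hright
  rw [hexpand, integral_add hdiff' (hk.smul_const _), integral_sub hdiff hright,
    integral_sub hkvv hleft, hleft_int, hright_int, integral_smul_const, hk_one, one_smul]
  ext p
  simp only [outerBilin_apply, outer_apply, PiLp.add_apply, PiLp.sub_apply]
  ring

end KernelAverage

-- `ρ_ε`; `mollify ρ ε` and `rCET ρ ε` are integrals against this kernel.
def mollifierKernel (ρ : E3 → ℝ) (ε : ℝ) (y : E3) : ℝ := (ε ^ 3)⁻¹ * ρ (ε⁻¹ • y)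

namespace IsMollifier

variable {ρ : E3 → ℝ} (hρ : IsMollifier ρ) {ε : ℝ}
include hρ

theorem integrable_mollifierKernel (hε : ε ≠ 0) : Integrable (mollifierKernel ρ ε) :=
  ((Integrable.of_integral_ne_zero (hρ.integral_one ▸ one_ne_zero)).comp_smul
    (inv_ne_zero hε)).const_mul _

theorem integral_mollifierKernel (hε : 0 < ε) : ∫ y, mollifierKernel ρ ε y = 1 := by
  simp only [mollifierKernel]
  rw [integral_const_mul, Measure.integral_comp_inv_smul_of_nonneg _ _ hε.le,
    finrank_euclideanSpace_fin, hρ.integral_one, smul_eq_mul, mul_one, inv_mul_cancel₀ (by positivity)]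

end IsMollifier

theorem Periodic3.aestronglyMeasurable {F : Type*} [TopologicalSpace F]
    [TopologicalSpace.PseudoMetrizableSpace F] {f : E3 → F} (hf : Periodic3 f)
    (hfT : AEStronglyMeasurable f μT) : AEStronglyMeasurable f volume :=
  isAddFundamentalDomain_torusBox.aestronglyMeasurable_of_restrict hf.vadd_torusLattice hfT

theorem Periodic3.ae_integrable_smul_outer_comp_sub {u : E3 → E3} (hu : Periodic3 u)
    (huL2 : MemLp u 2 μT) {k : E3 → ℝ} (hk : Integrable k) :
    ∀ᵐ x ∂μT, Integrable (fun y => k y • outer (u (x - y)) (u (x - y))) := by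
  have hum := hu.aestronglyMeasurable huL2.1
  have hsq_fin : ∫⁻ x in TorusBox, ‖u x‖ₑ ^ 2 < ⊤ := by
    simpa only [HasFiniteIntegral, enorm_pow, enorm_norm, μT] using
      (huL2.integrable_norm_pow two_ne_zero).2
  filter_upwards [isAddFundamentalDomain_torusBox.ae_lintegral_mul_sub_lt_top hk.1.enorm
    (hum.enorm.pow_const 2) (fun γ x => by rw [hu.vadd_torusLattice]) hk.2 hsq_fin] with x hx
  refine ⟨hk.1.smul (continuous_outer_self.comp_aestronglyMeasurable
    (hum.comp_quasiMeasurePreserving (quasiMeasurePreserving_sub_left_of_right_invariant _ x))), ?_⟩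
  simpa only [HasFiniteIntegral, enorm_smul, enorm_outer, sq] using hx

/-- The Constantin–E–Titi commutator identity:
`(u⊗u)_ε = u_ε ⊗ u_ε + r_ε(u,u) - (u - u_ε) ⊗ (u - u_ε)` a.e. on `𝕋³`. -/
theorem cet_commutator_identity (ρ : E3 → ℝ) (hρ : IsMollifier ρ)
    (u : E3 → E3) (hu : Periodic3 u) (huL2 : MemLp u 2 μT)
    (ε : ℝ) (hε : ε ∈ Set.Ioc (0 : ℝ) 1) :
    ∀ᵐ x ∂μT,
      mollify ρ ε (fun z => outer (u z) (u z)) x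
        = outer (mollify ρ ε u x) (mollify ρ ε u x) + rCET ρ ε u x
            - outer (u x - mollify ρ ε u x) (u x - mollify ρ ε u x) := by
  have hk := hρ.integrable_mollifierKernel hε.1.ne'
  have hum := hu.aestronglyMeasurable huL2.1
  filter_upwards [hu.ae_integrable_smul_outer_comp_sub huL2 hk] with x hx
  exact integral_smul_outer_self_eq hk (hρ.integral_mollifierKernel hε.1)
    (hum.comp_quasiMeasurePreserving (quasiMeasurePreserving_sub_left_of_right_invariant _ x))
    hx (u x)
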